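/- Consider the linear error system e1' = (2 - μ1)e1 - e2 - 2.9851 e3, e2' = 3 e1 - μ2 e2, e3' = -(0.0149 + μ3) e3 with positive feedback gains μ1, μ2, μ3. If μ1 > 2, μ1 μ2 > 1 + 2μ2, and μ1 μ2 (μ3 + 0.0149) > μ2 (2μ3 + 2.2528) + μ3 + 0.0149, then the origin (0,0,0) is asymptotically stable; equivalently, all eigenvalues of the coefficient matrix have negative real part. -/
import Mathlib


open Polynomial

lemma quad_root_neg_re (b c : ℝ) (hb : 0 < b) (hc : 0 < c) (z : ℂ)
    (h : z ^ 2 + (b : ℂ) * z + (c : ℂ) = 0) : z.re < 0 := by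
  have him : z.im * (2 * z.re + b) = 0 := by
    have := congrArg Complex.im h
    simp only [pow_two, Complex.add_im, Complex.mul_im, Complex.ofReal_re, Complex.ofReal_im,
      Complex.zero_im] at this
    ring_nf at this ⊢
    linarith
  have hre : z.re ^ 2 - z.im ^ 2 + b * z.re + c = 0 := by
    have := congrArg Complex.re h
    simp only [pow_two, Complex.add_re, Complex.mul_re, Complex.ofReal_re, Complex.ofReal_im,
      Complex.zero_re] at this
    ring_nf at this ⊢
    linarith
  by_contra hcon
  push_neg at hcon
  have h2 : 0 < 2 * z.re + b := by linarith
  have him0 : z.im = 0 := by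
    rcases mul_eq_zero.mp him with h' | h'
    · exact h'
    · linarith
  rw [him0] at hre
  nlinarith

/-- Under the stated gain inequalities, all eigenvalues of the controlled error system's
coefficient matrix have negative real part, i.e. the origin is asymptotically stable. -/
theorem glv_feedback_control_stability (μ1 μ2 μ3 : ℝ)
    (hμ1 : 0 < μ1) (hμ2 : 0 < μ2) (hμ3 : 0 < μ3)
    (h1 : 2 < μ1) (h2 : 1 + 2 * μ2 < μ1 * μ2)
    (h3 : μ2 * (2 * μ3 + 2.2528) + μ3 + 0.0149 < μ1 * μ2 * (μ3 + 0.0149))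
    (A : Matrix (Fin 3) (Fin 3) ℝ)
    (hA : A = !![2 - μ1, -1, -2.9851; 3, -μ2, 0; 0, 0, -(0.0149 + μ3)]) :
    ∀ z : ℂ, (A.map Complex.ofReal).charpoly.IsRoot z → z.re < 0 := by
  subst hA
  intro z hz
  have hz' : ((Matrix.charmatrix ((!![2 - μ1, -1, -2.9851; 3, -μ2, 0; 0, 0, -(0.0149 + μ3)] :
      Matrix (Fin 3) (Fin 3) ℝ).map Complex.ofReal)).det).eval z = 0 := hz
  rw [Matrix.det_fin_three] at hz'
  simp only [Matrix.charmatrix_apply, Matrix.diagonal_apply, Matrix.map_apply,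
    Matrix.cons_val', Matrix.cons_val_zero, Matrix.cons_val_one,
    Matrix.head_cons, Matrix.head_fin_const, Matrix.cons_val_fin_one, Matrix.empty_val'] at hz'
  simp at hz'
  have key : (z + ((0.0149 + μ3 : ℝ) : ℂ)) *
      (z ^ 2 + ((μ1 + μ2 - 2 : ℝ) : ℂ) * z + ((μ2 * (μ1 - 2) + 3 : ℝ) : ℂ)) = 0 := by
    push_cast at hz' ⊢
    ring_nf at hz' ⊢
    linear_combination hz'
  rcases mul_eq_zero.mp key with h' | h'
  · have : z = -((0.0149 + μ3 : ℝ) : ℂ) := eq_neg_of_add_eq_zero_left h'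
    rw [this]
    simp only [Complex.neg_re, Complex.ofReal_re]
    norm_num
    linarith
  · exact quad_root_neg_re _ _ (by linarith) (by nlinarith) z h'
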